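/- Let C ∈ ℂ^{L×L}, let T be a positive integer, and let v ∈ ℂ^L be a nonzero vector such that C^T v = v. Let k = dim 𝓚_T where 𝓚_T = span{v, Cv, …, C^{T−1}v}, and let W ∈ ℂ^{L×k} be a matrix whose columns form an orthonormal basis of 𝓚_T. Then (W* C W)^T = I_k, and consequently every eigenvalue z of the compression W* C W ∈ ℂ^{k×k} satisfies z^T = 1; in particular |z| = 1. -/

import Mathlib

/-!
Since `C^T v = v`, the Krylov space `𝓚_T` is `C`-invariant and `C^T` is the identity on it.
The columns of `W` form an orthonormal basis of `𝓚_T`, so `W Wᴴ` fixes every column of `C W`,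
i.e. `W M = C W` for the compression `M = Wᴴ C W`. Hence `W M^T = C^T W = W`, and multiplying
by `Wᴴ` gives `M^T = 1`; an eigenvalue `z` of `M` then satisfies `z^T = 1`.
-/

open scoped Matrix

/-- The Krylov subspace `𝓚_T = span{v, Cv, C²v, …, C^{T−1}v} ⊆ ℂ^L`. -/
noncomputable def krylov {L : ℕ} (C : Matrix (Fin L) (Fin L) ℂ) (v : Fin L → ℂ) (T : ℕ) :
    Submodule ℂ (Fin L → ℂ) :=
  Submodule.span ℂ (Set.range fun i : Fin T => (C ^ (i : ℕ)).mulVec v)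

namespace Matrix

variable {m n o R : Type*} [Fintype n]

lemma col_mul [NonUnitalNonAssocSemiring R] (A : Matrix m n R) (B : Matrix n o R) (j : o) :
    (A * B).col j = A *ᵥ B.col j :=
  rfl

lemma mul_pow_eq_pow_mul_of_mul_eq_mul [Semiring R] [Fintype m] [DecidableEq m] [DecidableEq n]
    {A : Matrix m m R} {B : Matrix n n R} {W : Matrix m n R} (h : W * B = A * W) (k : ℕ) :
    W * B ^ k = A ^ k * W := by
  induction k with
  | zero => simp
  | succ k ih => rw [pow_succ', pow_succ', ← Matrix.mul_assoc, h, Matrix.mul_assoc, ih,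
      Matrix.mul_assoc]

lemma pow_mulVec_eq_pow_smul [CommSemiring R] [DecidableEq n] {A : Matrix n n R} {u : n → R}
    {z : R} (h : A *ᵥ u = z • u) (k : ℕ) : (A ^ k) *ᵥ u = z ^ k • u := by
  induction k with
  | zero => simp
  | succ k ih => rw [pow_succ', ← mulVec_mulVec, ih, mulVec_smul, h, smul_smul, ← pow_succ]

variable [Fintype m] [CommSemiring R] [StarRing R] [DecidableEq n]

lemma mulVec_conjTranspose_mulVec_of_mem_span {W : Matrix m n R} (hW : Wᴴ * W = 1) {x : m → R}
    (hx : x ∈ Submodule.span R (Set.range W.col)) : W *ᵥ (Wᴴ *ᵥ x) = x := by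
  rw [← range_mulVecLin] at hx
  obtain ⟨c, rfl⟩ := hx
  simp only [mulVecLin_apply, mulVec_mulVec, hW, Matrix.mul_one]

lemma mul_conjTranspose_mul_of_col_mem_span {W : Matrix m n R} (hW : Wᴴ * W = 1)
    {B : Matrix m o R} (hB : ∀ j, B.col j ∈ Submodule.span R (Set.range W.col)) :
    W * (Wᴴ * B) = B :=
  ext_col fun j => by rw [col_mul, col_mul, mulVec_conjTranspose_mulVec_of_mem_span hW (hB j)]

end Matrix

section Krylov

variable {L : ℕ} {C : Matrix (Fin L) (Fin L) ℂ} {v : Fin L → ℂ} {T : ℕ}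

lemma krylov_le_comap_mulVecLin (hCv : (C ^ T) *ᵥ v = v) :
    krylov C v T ≤ (krylov C v T).comap C.mulVecLin := by
  refine Submodule.span_le.mpr ?_
  rintro _ ⟨i, rfl⟩
  simp only [SetLike.mem_coe, Submodule.mem_comap, Matrix.mulVecLin_apply, Matrix.mulVec_mulVec,
    ← pow_succ']
  obtain hi | hi := (show (i : ℕ) + 1 ≤ T from i.2).lt_or_eq
  · exact Submodule.subset_span ⟨⟨i + 1, hi⟩, rfl⟩
  · rw [hi, hCv]
    exact Submodule.subset_span ⟨⟨0, i.pos⟩, by simp⟩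

lemma krylov_le_eqLocus_pow (hCv : (C ^ T) *ᵥ v = v) :
    krylov C v T ≤ LinearMap.eqLocus (C ^ T).mulVecLin LinearMap.id := by
  refine Submodule.span_le.mpr ?_
  rintro _ ⟨i, rfl⟩
  simp only [SetLike.mem_coe, LinearMap.mem_eqLocus, Matrix.mulVecLin_apply, LinearMap.id_apply]
  rw [Matrix.mulVec_mulVec, pow_mul_comm, ← Matrix.mulVec_mulVec, hCv]

end Krylov

theorem compression_pow_eq_one_general
    {L : ℕ} (C : Matrix (Fin L) (Fin L) ℂ) (T : ℕ) (hT : 0 < T)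
    (v : Fin L → ℂ) (hCv : (C ^ T).mulVec v = v)
    (k : ℕ)
    (W : Matrix (Fin L) (Fin k) ℂ)
    (hWortho : Wᴴ * W = 1)
    (hWspan : Submodule.span ℂ (Set.range Wᵀ) = krylov C v T) :
    (Wᴴ * C * W) ^ T = 1 ∧
      ∀ z : ℂ, (∃ u : Fin k → ℂ, u ≠ 0 ∧ (Wᴴ * C * W).mulVec u = z • u) →
        z ^ T = 1 ∧ ‖z‖ = 1 := by
  have hspan : Submodule.span ℂ (Set.range W.col) = krylov C v T := hWspan
  have hcol : ∀ j, W.col j ∈ krylov C v T := fun j => hspan ▸ Submodule.subset_span ⟨j, rfl⟩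
  have hintertwine : W * (Wᴴ * C * W) = C * W := by
    rw [Matrix.mul_assoc]
    refine Matrix.mul_conjTranspose_mul_of_col_mem_span hWortho fun j => ?_
    rw [Matrix.col_mul, hspan]
    exact krylov_le_comap_mulVecLin hCv (hcol j)
  have hfix : C ^ T * W = W :=
    Matrix.ext_col fun j => by rw [Matrix.col_mul]; exact krylov_le_eqLocus_pow hCv (hcol j)
  have hpow : (Wᴴ * C * W) ^ T = 1 := by
    rw [← Matrix.one_mul ((Wᴴ * C * W) ^ T), ← hWortho, Matrix.mul_assoc,
      Matrix.mul_pow_eq_pow_mul_of_mul_eq_mul hintertwine, hfix, hWortho]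
  refine ⟨hpow, fun z ⟨u, hu, hz⟩ => ?_⟩
  have hzT : z ^ T = 1 := by
    refine smul_left_injective ℂ hu ?_
    simp only [← Matrix.pow_mulVec_eq_pow_smul hz T, hpow, Matrix.one_mulVec, one_smul]
  exact ⟨hzT, Complex.norm_eq_one_of_pow_eq_one hzT hT.ne'⟩

/-- Let `C ∈ ℂ^{L×L}`, `T > 0`, and `v ≠ 0` with `C^T v = v`.  If `k = dim 𝓚_T` and
the columns of `W ∈ ℂ^{L×k}` form an orthonormal basis of `𝓚_T` (i.e. `Wᴴ W = I_k` and
the columns span `𝓚_T`), then `(Wᴴ C W)^T = I_k`, and every eigenvalue `z` of `Wᴴ C W`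
satisfies `z^T = 1`; in particular `|z| = 1`. -/
theorem compression_pow_eq_one
    {L : ℕ} (C : Matrix (Fin L) (Fin L) ℂ) (T : ℕ) (hT : 0 < T)
    (v : Fin L → ℂ) (hv : v ≠ 0) (hCv : (C ^ T).mulVec v = v)
    (k : ℕ) (hk : k = Module.finrank ℂ (krylov C v T))
    (W : Matrix (Fin L) (Fin k) ℂ)
    (hWortho : Wᴴ * W = 1)
    (hWspan : Submodule.span ℂ (Set.range Wᵀ) = krylov C v T) :
    (Wᴴ * C * W) ^ T = 1 ∧
      ∀ z : ℂ, (∃ u : Fin k → ℂ, u ≠ 0 ∧ (Wᴴ * C * W).mulVec u = z • u) →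
        z ^ T = 1 ∧ ‖z‖ = 1 :=
  compression_pow_eq_one_general C T hT v hCv k W hWortho hWspan
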